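/- (Order–degree–height surface for hypergeometric creative telescoping, non-rational case; linear-algebra core.) Let r, d, h ∈ ℕ be such that d + θ_x + r·μ − ν ≥ 0, h + θ_y + r·ξ − η ≥ 0, θ_k + r·μ − ν ≥ 0, and (r+1)(d+1)(h+1) − (d + 1 + θ_x + r·μ)(θ_k + r·μ + 1)·η − (d + 2 + θ_x + θ_k + 2r·μ − ν)(h + 1 + θ_y + r·ξ − η)·ν > 0. Then there exist polynomials c_0, …, c_r ∈ C[x,y] with deg_x c_i ≤ d and deg_y c_i ≤ h, and a polynomial Y ∈ C[x,y,k] with deg_x Y ≤ d + θ_x + r·μ − ν, deg_y Y ≤ h + θ_y + r·ξ − η, deg_k Y ≤ θ_k + r·μ − ν, such that c_0, …, c_r, Y are not all zero and Σ_{i=0}^{r} c_i · α^i · S_x^i(p) · Π_{m=1}^{M} P_{i,m} = Q·S_k(Y) − R·Y. -/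

import Mathlib

open MvPolynomial

noncomputable section

/-- `C[x,y,k]`, realized as `MvPolynomial (Fin 3) C` with `x = X 0`, `y = X 1`, `k = X 2`. -/
abbrev P3 (C : Type*) [CommSemiring C] := MvPolynomial (Fin 3) C

/-- The embedding `C[y] → C[x,y,k]` sending the indeterminate to `y = X 1`. -/
def toY {C : Type*} [CommSemiring C] (q : Polynomial C) : P3 C :=
  Polynomial.aeval (X 1 : P3 C) q

/-- The rising factorial `q^{(n)} = q(q+1)⋯(q+n−1)`, with `q^{(0)} = 1`. -/
def risingFactorial {C : Type*} [CommSemiring C] (q : P3 C) (n : ℕ) : P3 C :=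
  ∏ j ∈ Finset.range n, (q + (j : P3 C))

/-- The shift `S_x` on `C[x,y,k]`: `x ↦ x+1`, `y ↦ y`, `k ↦ k`. -/
def SX3 (C : Type*) [CommSemiring C] : P3 C →ₐ[C] P3 C := aeval ![X 0 + 1, X 1, X 2]

/-- The shift `S_k` on `C[x,y,k]`: `x ↦ x`, `y ↦ y`, `k ↦ k+1`. -/
def SK3 (C : Type*) [CommSemiring C] : P3 C →ₐ[C] P3 C := aeval ![X 0, X 1, X 2 + 1]

/-- The fixed data of a proper hypergeometric term
`H = p α^x β^k Π_m Γ(A_m)Γ(B_m)/(Γ(U_m)Γ(V_m))`, together with a fixed order `r`. -/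
structure HyperData (C : Type*) [Field C] [CharZero C] where
  M : ℕ
  r : ℕ
  a : Fin M → ℕ
  a' : Fin M → ℕ
  b : Fin M → ℕ
  b' : Fin M → ℕ
  u : Fin M → ℕ
  u' : Fin M → ℕ
  v : Fin M → ℕ
  v' : Fin M → ℕ
  a'' : Fin M → Polynomial C
  b'' : Fin M → Polynomial C
  u'' : Fin M → Polynomial C
  v'' : Fin M → Polynomial C
  p : P3 C
  hp : p ≠ 0
  α : Polynomial C
  β : Polynomial C
  hα : α ≠ 0
  hβ : β ≠ 0

namespace HyperData

variable {C : Type*} [Field C] [CharZero C] (H : HyperData C)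

/-- `A_m = a_m x + a'_m k + a''_m`. -/
def A (m : Fin H.M) : P3 C := (H.a m : P3 C) * X 0 + (H.a' m : P3 C) * X 2 + toY (H.a'' m)

/-- `B_m = b_m x − b'_m k + b''_m`. -/
def B (m : Fin H.M) : P3 C := (H.b m : P3 C) * X 0 - (H.b' m : P3 C) * X 2 + toY (H.b'' m)

/-- `U_m = u_m x + u'_m k + u''_m`. -/
def U (m : Fin H.M) : P3 C := (H.u m : P3 C) * X 0 + (H.u' m : P3 C) * X 2 + toY (H.u'' m)

/-- `V_m = v_m x − v'_m k + v''_m`. -/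
def V (m : Fin H.M) : P3 C := (H.v m : P3 C) * X 0 - (H.v' m : P3 C) * X 2 + toY (H.v'' m)

/-- `P_{i,m} = A_m^{(i a_m)} B_m^{(i b_m)} (U_m+i u_m)^{((r−i)u_m)} (V_m+i v_m)^{((r−i)v_m)}`. -/
def Pim (i : ℕ) (m : Fin H.M) : P3 C :=
  risingFactorial (H.A m) (i * H.a m) * risingFactorial (H.B m) (i * H.b m) *
    risingFactorial (H.U m + ((i * H.u m : ℕ) : P3 C)) ((H.r - i) * H.u m) *
    risingFactorial (H.V m + ((i * H.v m : ℕ) : P3 C)) ((H.r - i) * H.v m)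

/-- `Q = β Π_m A_m^{(a'_m)} (V_m + r v_m − v'_m)^{(v'_m)}`. -/
def Q : P3 C :=
  toY H.β * ∏ m, risingFactorial (H.A m) (H.a' m) *
    risingFactorial (H.V m + ((H.r * H.v m : ℕ) : P3 C) - ((H.v' m : ℕ) : P3 C)) (H.v' m)

/-- `R = Π_m (U_m + r u_m − u'_m)^{(u'_m)} B_m^{(b'_m)}`. -/
def R : P3 C :=
  ∏ m, risingFactorial (H.U m + ((H.r * H.u m : ℕ) : P3 C) - ((H.u' m : ℕ) : P3 C)) (H.u' m) *
    risingFactorial (H.B m) (H.b' m)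

/-- `θ_x = deg_x p`. -/
def θx : ℕ := degreeOf 0 H.p

/-- `θ_y = deg_y p`. -/
def θy : ℕ := degreeOf 1 H.p

/-- `θ_k = deg_k p`. -/
def θk : ℕ := degreeOf 2 H.p

/-- `μ = max(Σ_m (a_m + b_m), Σ_m (u_m + v_m))`. -/
def μ : ℕ := max (∑ m, (H.a m + H.b m)) (∑ m, (H.u m + H.v m))

/-- `ν = max(Σ_m (a'_m + v'_m), Σ_m (u'_m + b'_m))`. -/
def ν : ℕ := max (∑ m, (H.a' m + H.v' m)) (∑ m, (H.u' m + H.b' m))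

/-- `ξ = max(deg_y α + Σ_m (a_m deg_y A_m + b_m deg_y B_m), Σ_m (u_m deg_y U_m + v_m deg_y V_m))`. -/
def ξ : ℕ :=
  max (H.α.natDegree + ∑ m, (H.a m * degreeOf 1 (H.A m) + H.b m * degreeOf 1 (H.B m)))
    (∑ m, (H.u m * degreeOf 1 (H.U m) + H.v m * degreeOf 1 (H.V m)))

/-- `η = max(deg_y β + Σ_m (a'_m deg_y A_m + v'_m deg_y V_m), Σ_m (u'_m deg_y U_m + b'_m deg_y B_m))`. -/
def η : ℕ :=
  max (H.β.natDegree + ∑ m, (H.a' m * degreeOf 1 (H.A m) + H.v' m * degreeOf 1 (H.V m)))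
    (∑ m, (H.u' m * degreeOf 1 (H.U m) + H.b' m * degreeOf 1 (H.B m)))

/-- `P = Σ_{i=0}^{r} c_i α^i S_x^i(p) Π_m P_{i,m}`. -/
def P (c : ℕ → P3 C) : P3 C :=
  ∑ i ∈ Finset.range (H.r + 1), c i * toY H.α ^ i * (⇑(SX3 C))^[i] H.p * ∏ m, H.Pim i m

end HyperData

end

/-!
The unknowns `c_0, …, c_r` and `Y` enter the equation `P = Q·S_k(Y) − R·Y` linearly.
Coordinatewise degree bounds for `α^i S_x^i(p) Π_m P_{i,m}`, `Q` and `R` (the shifts do not raise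
degrees, and a rising factorial of length `n` of a linear form has degree at most `n` in `x` and
in `k`) show that both sides lie in the space of polynomials of degrees at most
`(d + θ_x + rμ, h + θ_y + rξ, θ_k + rμ)` in `(x, y, k)`. The hypothesis on `(r, d, h)` says exactly
that the unknowns range over a space of larger dimension, so the linear map
`(c, Y) ↦ P − (Q·S_k(Y) − R·Y)` has a nonzero kernel vector.
-/

section DegreeBox

variable (R : Type*) {σ : Type*} [CommSemiring R]

noncomputable def degreeBox (D : σ →₀ ℕ) : Submodule R (MvPolynomial σ R) :=
  restrictSupport R (Set.Iic D)

variable {R}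

theorem mem_degreeBox_iff {D : σ →₀ ℕ} {p : MvPolynomial σ R} :
    p ∈ degreeBox R D ↔ ∀ i, degreeOf i p ≤ D i := by
  simp only [degreeBox, mem_restrictSupport_iff, Set.subset_def, Finset.mem_coe, Set.mem_Iic,
    Finsupp.le_def, degreeOf_le_iff]
  exact ⟨fun h i m hm => h m hm i, fun h m hm i => h i m hm⟩

instance (D : σ →₀ ℕ) : Module.Free R (degreeBox R D) :=
  Module.Free.of_basis (basisRestrictSupport R _)

instance (D : σ →₀ ℕ) : Module.Finite R (degreeBox R D) := by
  classical
  rw [degreeBox, ← Finset.coe_Iic]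
  exact Module.Finite.of_basis (basisRestrictSupport R _)

theorem finrank_degreeBox [StrongRankCondition R] [Fintype σ] (D : σ →₀ ℕ) :
    Module.finrank R (degreeBox R D) = ∏ i, (D i + 1) := by
  classical
  rw [degreeBox, ← Finset.coe_Iic, Module.finrank_eq_card_basis (basisRestrictSupport R _),
    ← Set.toFinset_card, Finset.toFinset_coe, Finsupp.card_Iic]
  refine Finset.prod_subset (Finset.subset_univ _) (fun i _ hi => ?_) |>.trans ?_
  · rw [Finsupp.notMem_support_iff.mp hi]; rfl
  · simp

end DegreeBox

section DegreeOf

variable {R σ : Type*}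

theorem degreeOf_natCast [CommSemiring R] (i : σ) (n : ℕ) :
    degreeOf i (n : MvPolynomial σ R) = 0 := by
  rw [← map_natCast (C : R →+* MvPolynomial σ R)]
  exact degreeOf_C _ _

theorem degreeOf_add_natCast_le [CommSemiring R] (i : σ) (p : MvPolynomial σ R) (n : ℕ) :
    degreeOf i (p + (n : MvPolynomial σ R)) ≤ degreeOf i p :=
  (degreeOf_add_le _ _ _).trans (by rw [degreeOf_natCast, Nat.max_zero])

theorem degreeOf_sub_natCast_le [CommRing R] (i : σ) (p : MvPolynomial σ R) (n : ℕ) :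
    degreeOf i (p - (n : MvPolynomial σ R)) ≤ degreeOf i p :=
  (degreeOf_sub_le _ _ _).trans (by rw [degreeOf_natCast, Nat.max_zero])

theorem degreeOf_mul_le_of_le [CommSemiring R] {i : σ} {p q : MvPolynomial σ R} {a b : ℕ}
    (hp : degreeOf i p ≤ a) (hq : degreeOf i q ≤ b) : degreeOf i (p * q) ≤ a + b :=
  (degreeOf_mul_le i p q).trans (add_le_add hp hq)

theorem degreeOf_natCast_mul_X_le_one [CommSemiring R] [Nontrivial R] [DecidableEq σ]
    (i j : σ) (n : ℕ) : degreeOf i ((n : MvPolynomial σ R) * X j) ≤ 1 :=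
  (degreeOf_mul_le _ _ _).trans (by rw [degreeOf_natCast, degreeOf_X]; split <;> omega)

theorem degreeOf_X_add_one_le_ite [CommSemiring R] [Nontrivial R] [DecidableEq σ] (i j : σ) :
    degreeOf i (X j + 1 : MvPolynomial σ R) ≤ if i = j then 1 else 0 :=
  (degreeOf_add_le _ _ _).trans (max_le (degreeOf_X i j).le (by rw [degreeOf_one]; omega))

theorem degreeOf_aeval_le [CommSemiring R] [DecidableEq σ] (i : σ) {g : σ → MvPolynomial σ R}
    (hg : ∀ j, degreeOf i (g j) ≤ if i = j then 1 else 0) (p : MvPolynomial σ R) :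
    degreeOf i (aeval g p) ≤ degreeOf i p := by
  rw [aeval_def, eval₂_eq]
  refine (degreeOf_sum_le _ _ _).trans (Finset.sup_le fun s hs => ?_)
  calc degreeOf i (algebraMap R _ (coeff s p) * ∏ j ∈ s.support, g j ^ s j)
      ≤ ∑ j ∈ s.support, s j * (if i = j then 1 else 0) := by
        refine (degreeOf_mul_le _ _ _).trans ?_
        rw [MvPolynomial.algebraMap_eq, degreeOf_C, zero_add]
        exact (degreeOf_prod_le _ _ _).trans (Finset.sum_le_sum fun j _ =>
          (degreeOf_pow_le _ _ _).trans (Nat.mul_le_mul_left _ (hg j)))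
    _ ≤ s i := by simp only [mul_ite, mul_one, mul_zero, Finset.sum_ite_eq]; split <;> simp
    _ ≤ degreeOf i p := monomial_le_degreeOf i hs

end DegreeOf

section ThreeVariables

variable {C : Type*} [CommSemiring C]

theorem degreeOf_risingFactorial_le (i : Fin 3) (q : P3 C) (n : ℕ) :
    degreeOf i (risingFactorial q n) ≤ n * degreeOf i q :=
  calc degreeOf i (risingFactorial q n)
      ≤ ∑ j ∈ Finset.range n, degreeOf i (q + (j : P3 C)) := degreeOf_prod_le _ _ _
    _ ≤ ∑ _j ∈ Finset.range n, degreeOf i q :=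
        Finset.sum_le_sum fun j _ => degreeOf_add_natCast_le i q j
    _ = n * degreeOf i q := by rw [Finset.sum_const, Finset.card_range, smul_eq_mul]

theorem degreeOf_toY_le (i : Fin 3) (q : Polynomial C) :
    degreeOf i (toY q) ≤ q.natDegree * degreeOf i (X 1 : P3 C) := by
  rw [toY, Polynomial.aeval_eq_sum_range]
  refine (degreeOf_sum_le _ _ _).trans (Finset.sup_le fun n hn => ?_)
  rw [smul_eq_C_mul]
  exact (degreeOf_C_mul_le _ _ _).trans ((degreeOf_pow_le _ _ _).trans
    (Nat.mul_le_mul_right _ (Nat.lt_succ_iff.mp (Finset.mem_range.mp hn))))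

theorem degreeOf_toY_of_ne_one {i : Fin 3} (hi : i ≠ 1) (q : Polynomial C) :
    degreeOf i (toY q) = 0 :=
  Nat.eq_zero_of_le_zero ((degreeOf_toY_le i q).trans (by rw [degreeOf_X_of_ne hi, mul_zero]))

theorem degreeOf_one_toY_le [Nontrivial C] (q : Polynomial C) :
    degreeOf 1 (toY q) ≤ q.natDegree :=
  (degreeOf_toY_le 1 q).trans (by rw [degreeOf_X_self, mul_one])

theorem degreeOf_add_toY_le {i : Fin 3} (hi : i ≠ 1) (e : P3 C) (q : Polynomial C) :
    degreeOf i (e + toY q) ≤ degreeOf i e :=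
  (degreeOf_add_le _ _ _).trans (by rw [degreeOf_toY_of_ne_one hi, Nat.max_zero])

variable (C) in
noncomputable abbrev degreeBox3 (a b c : ℕ) : Submodule C (P3 C) :=
  degreeBox C (Finsupp.equivFunOnFinite.symm ![a, b, c])

theorem mem_degreeBox3_iff {a b c : ℕ} {p : P3 C} :
    p ∈ degreeBox3 C a b c ↔ degreeOf 0 p ≤ a ∧ degreeOf 1 p ≤ b ∧ degreeOf 2 p ≤ c := by
  simp [mem_degreeBox_iff, Fin.forall_fin_succ]

theorem finrank_degreeBox3 [StrongRankCondition C] (a b c : ℕ) :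
    Module.finrank C (degreeBox3 C a b c) = (a + 1) * (b + 1) * (c + 1) := by
  rw [finrank_degreeBox, Fin.prod_univ_three]
  rfl

theorem degreeOf_SX3_le [Nontrivial C] (i : Fin 3) (p : P3 C) :
    degreeOf i (SX3 C p) ≤ degreeOf i p :=
  degreeOf_aeval_le i (fun j => by
    fin_cases j
    exacts [degreeOf_X_add_one_le_ite i 0, (degreeOf_X i 1).le, (degreeOf_X i 2).le]) p

theorem degreeOf_SK3_le [Nontrivial C] (i : Fin 3) (p : P3 C) :
    degreeOf i (SK3 C p) ≤ degreeOf i p :=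
  degreeOf_aeval_le i (fun j => by
    fin_cases j
    exacts [(degreeOf_X i 0).le, (degreeOf_X i 1).le, degreeOf_X_add_one_le_ite i 2]) p

theorem degreeOf_iterate_SX3_le [Nontrivial C] (i : Fin 3) (n : ℕ) (p : P3 C) :
    degreeOf i ((⇑(SX3 C))^[n] p) ≤ degreeOf i p := by
  induction n with
  | zero => rfl
  | succ n ih =>
    rw [Function.iterate_succ_apply']
    exact (degreeOf_SX3_le i _).trans ih

end ThreeVariables

theorem mul_add_tsub_mul_le_mul_max {j r : ℕ} (hj : j ≤ r) (s t : ℕ) :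
    j * s + (r - j) * t ≤ r * max s t :=
  calc j * s + (r - j) * t ≤ j * max s t + (r - j) * max s t :=
        add_le_add (Nat.mul_le_mul_left _ (le_max_left _ _))
          (Nat.mul_le_mul_left _ (le_max_right _ _))
    _ = r * max s t := by rw [← add_mul, Nat.add_sub_cancel' hj]

theorem Finset.sum_mul_add_mul_le_sum_add {ι : Type*} (s : Finset ι) {a b f g : ι → ℕ}
    (hf : ∀ m, f m ≤ 1) (hg : ∀ m, g m ≤ 1) :
    ∑ m ∈ s, (a m * f m + b m * g m) ≤ ∑ m ∈ s, (a m + b m) :=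
  Finset.sum_le_sum fun m _ =>
    add_le_add (mul_le_of_le_one_right (Nat.zero_le _) (hf m))
      (mul_le_of_le_one_right (Nat.zero_le _) (hg m))

namespace HyperData

variable {C : Type*} [Field C] [CharZero C] (H : HyperData C)

theorem degreeOf_A_le_one {i : Fin 3} (hi : i ≠ 1) (m : Fin H.M) : degreeOf i (H.A m) ≤ 1 :=
  (degreeOf_add_toY_le hi _ _).trans <| (degreeOf_add_le _ _ _).trans <|
    max_le (degreeOf_natCast_mul_X_le_one _ _ _) (degreeOf_natCast_mul_X_le_one _ _ _)

theorem degreeOf_B_le_one {i : Fin 3} (hi : i ≠ 1) (m : Fin H.M) : degreeOf i (H.B m) ≤ 1 :=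
  (degreeOf_add_toY_le hi _ _).trans <| (degreeOf_sub_le _ _ _).trans <|
    max_le (degreeOf_natCast_mul_X_le_one _ _ _) (degreeOf_natCast_mul_X_le_one _ _ _)

theorem degreeOf_U_le_one {i : Fin 3} (hi : i ≠ 1) (m : Fin H.M) : degreeOf i (H.U m) ≤ 1 :=
  (degreeOf_add_toY_le hi _ _).trans <| (degreeOf_add_le _ _ _).trans <|
    max_le (degreeOf_natCast_mul_X_le_one _ _ _) (degreeOf_natCast_mul_X_le_one _ _ _)

theorem degreeOf_V_le_one {i : Fin 3} (hi : i ≠ 1) (m : Fin H.M) : degreeOf i (H.V m) ≤ 1 :=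
  (degreeOf_add_toY_le hi _ _).trans <| (degreeOf_sub_le _ _ _).trans <|
    max_le (degreeOf_natCast_mul_X_le_one _ _ _) (degreeOf_natCast_mul_X_le_one _ _ _)

theorem degreeOf_Pim_le (i : Fin 3) (j : ℕ) (m : Fin H.M) :
    degreeOf i (H.Pim j m) ≤
      j * (H.a m * degreeOf i (H.A m) + H.b m * degreeOf i (H.B m)) +
        (H.r - j) * (H.u m * degreeOf i (H.U m) + H.v m * degreeOf i (H.V m)) := by
  have hU := (degreeOf_risingFactorial_le i _ ((H.r - j) * H.u m)).trans
    (Nat.mul_le_mul_left _ (degreeOf_add_natCast_le i (H.U m) (j * H.u m)))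
  have hV := (degreeOf_risingFactorial_le i _ ((H.r - j) * H.v m)).trans
    (Nat.mul_le_mul_left _ (degreeOf_add_natCast_le i (H.V m) (j * H.v m)))
  refine (degreeOf_mul_le_of_le (degreeOf_mul_le_of_le (degreeOf_mul_le_of_le
    (degreeOf_risingFactorial_le _ _ _) (degreeOf_risingFactorial_le _ _ _)) hU) hV).trans_eq ?_
  ring

theorem degreeOf_prod_Pim_le (i : Fin 3) (j : ℕ) :
    degreeOf i (∏ m, H.Pim j m) ≤
      j * ∑ m, (H.a m * degreeOf i (H.A m) + H.b m * degreeOf i (H.B m)) +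
        (H.r - j) * ∑ m, (H.u m * degreeOf i (H.U m) + H.v m * degreeOf i (H.V m)) :=
  (degreeOf_prod_le _ _ _).trans <| (Finset.sum_le_sum fun m _ => H.degreeOf_Pim_le i j m).trans_eq
    (by rw [Finset.sum_add_distrib, Finset.mul_sum, Finset.mul_sum])

noncomputable def Pfactor (j : ℕ) : P3 C :=
  toY H.α ^ j * (⇑(SX3 C))^[j] H.p * ∏ m, H.Pim j m

theorem P_eq_sum_Pfactor (c : ℕ → P3 C) :
    H.P c = ∑ j : Fin (H.r + 1), c j * H.Pfactor j := by
  simp only [P, Pfactor, Finset.sum_range, mul_assoc]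

theorem degreeOf_Pfactor_le (i : Fin 3) (j : ℕ) :
    degreeOf i (H.Pfactor j) ≤
      j * degreeOf i (toY H.α) + degreeOf i H.p + degreeOf i (∏ m, H.Pim j m) :=
  degreeOf_mul_le_of_le
    (degreeOf_mul_le_of_le (degreeOf_pow_le _ _ _)
      (degreeOf_iterate_SX3_le i j H.p)) le_rfl

theorem degreeOf_Pfactor_le_of_ne_one {i : Fin 3} (hi : i ≠ 1) {j : ℕ} (hj : j ≤ H.r) :
    degreeOf i (H.Pfactor j) ≤ degreeOf i H.p + H.r * H.μ := by
  have hprod : degreeOf i (∏ m, H.Pim j m) ≤ H.r * H.μ :=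
    (H.degreeOf_prod_Pim_le i j).trans <| (add_le_add
      (Nat.mul_le_mul_left _ (Finset.sum_mul_add_mul_le_sum_add _
        (H.degreeOf_A_le_one hi) (H.degreeOf_B_le_one hi)))
      (Nat.mul_le_mul_left _ (Finset.sum_mul_add_mul_le_sum_add _
        (H.degreeOf_U_le_one hi) (H.degreeOf_V_le_one hi)))).trans
      (mul_add_tsub_mul_le_mul_max hj _ _)
  have := H.degreeOf_Pfactor_le i j
  rw [degreeOf_toY_of_ne_one hi, mul_zero, zero_add] at this
  omega

theorem degreeOf_one_Pfactor_le {j : ℕ} (hj : j ≤ H.r) :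
    degreeOf 1 (H.Pfactor j) ≤ H.θy + H.r * H.ξ := by
  have hα := Nat.mul_le_mul_left j (degreeOf_one_toY_le H.α)
  have hmax := mul_add_tsub_mul_le_mul_max hj
    (H.α.natDegree + ∑ m, (H.a m * degreeOf 1 (H.A m) + H.b m * degreeOf 1 (H.B m)))
    (∑ m, (H.u m * degreeOf 1 (H.U m) + H.v m * degreeOf 1 (H.V m)))
  have := H.degreeOf_Pfactor_le 1 j
  have := H.degreeOf_prod_Pim_le 1 j
  rw [θy, ξ]
  linarith

theorem degreeOf_Q_le (i : Fin 3) :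
    degreeOf i H.Q ≤ degreeOf i (toY H.β) +
      ∑ m, (H.a' m * degreeOf i (H.A m) + H.v' m * degreeOf i (H.V m)) :=
  degreeOf_mul_le_of_le le_rfl <| (degreeOf_prod_le _ _ _).trans <| Finset.sum_le_sum fun _ _ =>
    degreeOf_mul_le_of_le (degreeOf_risingFactorial_le _ _ _) <|
      (degreeOf_risingFactorial_le _ _ _).trans <| Nat.mul_le_mul_left _ <|
        (degreeOf_sub_natCast_le _ _ _).trans (degreeOf_add_natCast_le _ _ _)

theorem degreeOf_R_le (i : Fin 3) :
    degreeOf i H.R ≤ ∑ m, (H.u' m * degreeOf i (H.U m) + H.b' m * degreeOf i (H.B m)) :=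
  (degreeOf_prod_le _ _ _).trans <| Finset.sum_le_sum fun _ _ =>
    degreeOf_mul_le_of_le ((degreeOf_risingFactorial_le _ _ _).trans <| Nat.mul_le_mul_left _ <|
      (degreeOf_sub_natCast_le _ _ _).trans (degreeOf_add_natCast_le _ _ _))
      (degreeOf_risingFactorial_le _ _ _)

theorem degreeOf_Q_le_of_ne_one {i : Fin 3} (hi : i ≠ 1) : degreeOf i H.Q ≤ H.ν :=
  (H.degreeOf_Q_le i).trans <| by
    rw [degreeOf_toY_of_ne_one hi, zero_add]
    exact (Finset.sum_mul_add_mul_le_sum_add _ (H.degreeOf_A_le_one hi)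
      (H.degreeOf_V_le_one hi)).trans (le_max_left _ _)

theorem degreeOf_R_le_of_ne_one {i : Fin 3} (hi : i ≠ 1) : degreeOf i H.R ≤ H.ν :=
  (H.degreeOf_R_le i).trans <| (Finset.sum_mul_add_mul_le_sum_add _ (H.degreeOf_U_le_one hi)
      (H.degreeOf_B_le_one hi)).trans (le_max_right _ _)

theorem degreeOf_one_Q_le : degreeOf 1 H.Q ≤ H.η :=
  (H.degreeOf_Q_le 1).trans <|
    (Nat.add_le_add_right (degreeOf_one_toY_le _) _).trans (le_max_left _ _)

theorem degreeOf_one_R_le : degreeOf 1 H.R ≤ H.η :=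
  (H.degreeOf_R_le 1).trans (le_max_right _ _)

noncomputable def telescopingMap : ((Fin (H.r + 1) → P3 C) × P3 C) →ₗ[C] P3 C :=
  (∑ j : Fin (H.r + 1),
      LinearMap.mulRight C (H.Pfactor j) ∘ₗ LinearMap.proj j ∘ₗ LinearMap.fst C _ _) -
    (LinearMap.mulLeft C H.Q ∘ₗ (SK3 C).toLinearMap - LinearMap.mulLeft C H.R) ∘ₗ
      LinearMap.snd C _ _

theorem telescopingMap_apply (c : Fin (H.r + 1) → P3 C) (Y : P3 C) :
    H.telescopingMap (c, Y) = ∑ j, c j * H.Pfactor j - (H.Q * SK3 C Y - H.R * Y) := by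
  simp [telescopingMap]

theorem degreeOf_telescopingMap_le (i : Fin 3) {N : ℕ} {c : Fin (H.r + 1) → P3 C} {Y : P3 C}
    (hc : ∀ j, degreeOf i (c j) + degreeOf i (H.Pfactor j) ≤ N)
    (hQ : degreeOf i H.Q + degreeOf i Y ≤ N) (hR : degreeOf i H.R + degreeOf i Y ≤ N) :
    degreeOf i (H.telescopingMap (c, Y)) ≤ N := by
  rw [telescopingMap_apply]
  refine (degreeOf_sub_le _ _ _).trans (max_le ?_ ((degreeOf_sub_le _ _ _).trans (max_le ?_ ?_)))
  · exact (degreeOf_sum_le _ _ _).trans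
      (Finset.sup_le fun j _ => (degreeOf_mul_le _ _ _).trans (hc j))
  · exact (degreeOf_mul_le_of_le le_rfl (degreeOf_SK3_le i Y)).trans hQ
  · exact (degreeOf_mul_le _ _ _).trans hR

theorem telescopingMap_mem_degreeBox3 {d h Ex Ey Ek : ℕ}
    (hEx : Ex + H.ν = d + H.θx + H.r * H.μ) (hEy : Ey + H.η = h + H.θy + H.r * H.ξ)
    (hEk : Ek + H.ν = H.θk + H.r * H.μ) {c : Fin (H.r + 1) → P3 C} {Y : P3 C}
    (hc : ∀ j, c j ∈ degreeBox3 C d h 0) (hY : Y ∈ degreeBox3 C Ex Ey Ek) :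
    H.telescopingMap (c, Y) ∈
      degreeBox3 C (d + H.θx + H.r * H.μ) (h + H.θy + H.r * H.ξ) (H.θk + H.r * H.μ) := by
  simp only [mem_degreeBox3_iff] at hc hY ⊢
  have hj (j : Fin (H.r + 1)) : j.val ≤ H.r := Nat.lt_succ_iff.mp j.isLt
  have hx (j : Fin (H.r + 1)) : degreeOf 0 (H.Pfactor j) ≤ H.θx + H.r * H.μ :=
    H.degreeOf_Pfactor_le_of_ne_one (by decide) (hj j)
  have hy (j : Fin (H.r + 1)) := H.degreeOf_one_Pfactor_le (hj j)
  have hk (j : Fin (H.r + 1)) : degreeOf 2 (H.Pfactor j) ≤ H.θk + H.r * H.μ :=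
    H.degreeOf_Pfactor_le_of_ne_one (by decide) (hj j)
  have hQx := H.degreeOf_Q_le_of_ne_one (i := 0) (by decide)
  have hRx := H.degreeOf_R_le_of_ne_one (i := 0) (by decide)
  have hQk := H.degreeOf_Q_le_of_ne_one (i := 2) (by decide)
  have hRk := H.degreeOf_R_le_of_ne_one (i := 2) (by decide)
  have hQy := H.degreeOf_one_Q_le
  have hRy := H.degreeOf_one_R_le
  refine ⟨H.degreeOf_telescopingMap_le 0 (fun j => ?_) ?_ ?_,
    H.degreeOf_telescopingMap_le 1 (fun j => ?_) ?_ ?_,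
    H.degreeOf_telescopingMap_le 2 (fun j => ?_) ?_ ?_⟩ <;>
  grind

theorem exists_ne_zero_telescopingMap_eq_zero {d h Ex Ey Ek : ℕ}
    (hEx : Ex + H.ν = d + H.θx + H.r * H.μ) (hEy : Ey + H.η = h + H.θy + H.r * H.ξ)
    (hEk : Ek + H.ν = H.θk + H.r * H.μ)
    (hdim : (d + H.θx + H.r * H.μ + 1) * (h + H.θy + H.r * H.ξ + 1) * (H.θk + H.r * H.μ + 1) <
      (H.r + 1) * ((d + 1) * (h + 1) * (0 + 1)) + (Ex + 1) * (Ey + 1) * (Ek + 1)) :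
    ∃ (c : Fin (H.r + 1) → P3 C) (Y : P3 C), (∀ j, c j ∈ degreeBox3 C d h 0) ∧
      Y ∈ degreeBox3 C Ex Ey Ek ∧ (c, Y) ≠ 0 ∧ H.telescopingMap (c, Y) = 0 := by
  let φ := (H.telescopingMap ∘ₗ ((degreeBox3 C d h 0).subtype.compLeft (Fin (H.r + 1))).prodMap
    (degreeBox3 C Ex Ey Ek).subtype).codRestrict _ fun w =>
      H.telescopingMap_mem_degreeBox3 hEx hEy hEk (fun j => (w.1 j).2) w.2.2
  have hker : LinearMap.ker φ ≠ ⊥ := LinearMap.ker_ne_bot_of_finrank_lt <| by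
    simpa [Module.finrank_prod, Module.finrank_pi_fintype, finrank_degreeBox3] using hdim
  obtain ⟨w, hw, hw0⟩ := (Submodule.ne_bot_iff _).mp hker
  refine ⟨fun j => w.1 j, w.2, fun j => (w.1 j).2, w.2.2, fun h0 => hw0 ?_,
    congrArg Subtype.val (LinearMap.mem_ker.mp hw)⟩
  rw [Prod.mk_eq_zero] at h0
  exact Prod.ext (funext fun j => Subtype.ext (congrFun h0.1 j)) (Subtype.ext h0.2)

end HyperData

open HyperData in
/-- Order–degree–height surface for hypergeometric creative telescoping
(non-rational case), linear-algebra core: if `(r,d,h)` satisfies the stated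
inequality (and the auxiliary nonnegativity conditions), then there are
`c_0, …, c_r ∈ C[x,y]` with `deg_x c_i ≤ d`, `deg_y c_i ≤ h` and `Y ∈ C[x,y,k]`
with the indicated degree bounds, not all zero, solving
`Σ_i c_i α^i S_x^i(p) Π_m P_{i,m} = Q·S_k(Y) − R·Y`. -/
theorem telescoper_order_degree_height_surface_nonrational
    (C : Type*) [Field C] [CharZero C] (H : HyperData C) (d h : ℕ)
    (h1 : (0 : ℤ) ≤ (d : ℤ) + H.θx + H.r * H.μ - H.ν)
    (h2 : (0 : ℤ) ≤ (h : ℤ) + H.θy + H.r * H.ξ - H.η)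
    (h3 : (0 : ℤ) ≤ (H.θk : ℤ) + H.r * H.μ - H.ν)
    (hineq :
      ((H.r : ℤ) + 1) * ((d : ℤ) + 1) * ((h : ℤ) + 1)
        - ((d : ℤ) + 1 + H.θx + H.r * H.μ) * ((H.θk : ℤ) + H.r * H.μ + 1) * H.η
        - ((d : ℤ) + 2 + H.θx + H.θk + 2 * H.r * H.μ - H.ν)
            * ((h : ℤ) + 1 + H.θy + H.r * H.ξ - H.η) * H.ν > 0) :
    ∃ (c : ℕ → P3 C) (Y : P3 C),
      (∀ i ≤ H.r, degreeOf 2 (c i) = 0 ∧ degreeOf 0 (c i) ≤ d ∧ degreeOf 1 (c i) ≤ h) ∧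
      (degreeOf 0 Y : ℤ) ≤ (d : ℤ) + H.θx + H.r * H.μ - H.ν ∧
      (degreeOf 1 Y : ℤ) ≤ (h : ℤ) + H.θy + H.r * H.ξ - H.η ∧
      (degreeOf 2 Y : ℤ) ≤ (H.θk : ℤ) + H.r * H.μ - H.ν ∧
      ¬ ((∀ i ≤ H.r, c i = 0) ∧ Y = 0) ∧
      H.P c = H.Q * SK3 C Y - H.R * Y := by
  obtain ⟨Ex, hEx⟩ := Int.eq_ofNat_of_zero_le h1
  obtain ⟨Ey, hEy⟩ := Int.eq_ofNat_of_zero_le h2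
  obtain ⟨Ek, hEk⟩ := Int.eq_ofNat_of_zero_le h3
  -- The target box exceeds the `Y`-box in dimension by exactly the two terms subtracted in `hineq`.
  have hdim : (d + H.θx + H.r * H.μ + 1) * (h + H.θy + H.r * H.ξ + 1) * (H.θk + H.r * H.μ + 1) <
      (H.r + 1) * ((d + 1) * (h + 1) * (0 + 1)) + (Ex + 1) * (Ey + 1) * (Ek + 1) := by
    zify
    rw [← hEx, ← hEy, ← hEk]
    linarith
  obtain ⟨c, Y, hc, hY, hne, hzero⟩ :=
    H.exists_ne_zero_telescopingMap_eq_zero (by omega) (by omega) (by omega) hdim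
  have hext (j : Fin (H.r + 1)) : Function.extend Fin.val c 0 j = c j :=
    Fin.val_injective.extend_apply c 0 j
  obtain ⟨hYx, hYy, hYk⟩ := mem_degreeBox3_iff.mp hY
  refine ⟨Function.extend Fin.val c 0, Y, fun i hi => ?_, by rw [hEx]; exact_mod_cast hYx,
    by rw [hEy]; exact_mod_cast hYy, by rw [hEk]; exact_mod_cast hYk, ?_, ?_⟩
  · obtain ⟨hx, hy, hk⟩ := mem_degreeBox3_iff.mp (hc ⟨i, Nat.lt_succ_of_le hi⟩)
    rw [← Fin.val_mk (Nat.lt_succ_of_le hi), hext]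
    exact ⟨Nat.le_zero.mp hk, hx, hy⟩
  · rintro ⟨hc0, rfl⟩
    exact hne <| Prod.ext (funext fun j => (hext j).symm.trans (hc0 j (Nat.lt_succ_iff.mp j.isLt)))
      rfl
  · rw [P_eq_sum_Pfactor, ← sub_eq_zero, ← hzero, telescopingMap_apply]
    simp only [hext]
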